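/- arXiv:1611.01647 — 5 statements merged into one kernel-verified Lean document; each statement's English description precedes it below -/
import Mathlib

section
/- Let G be a connected graph on n vertices that is not a tree. Let Z_0 be the number of sink-free orientations of G and Z_1 the number of orientations of G having exactly one sink. Then Z_1 ≤ n(n-1)·Z_0. -/
/-- `o : V → V → Bool` is an orientation of the graph `G`: every directed edge `u → v`
(`o u v = true`) is an edge of `G`, and every edge of `G` receives exactly one direction. -/
def IsOrientation {V : Type*} (G : SimpleGraph V) (o : V → V → Bool) : Prop :=
  (∀ u v, o u v = true → G.Adj u v) ∧ ∀ u v, G.Adj u v → o u v = !o v u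

/-- `v` is a sink under orientation `o`: all edges incident to `v` point into `v`. -/
def IsSink {V : Type*} (G : SimpleGraph V) (o : V → V → Bool) (v : V) : Prop :=
  ∀ u, G.Adj u v → o u v = true

/-!
Let `o` have the unique sink `v`. Call a directed path `u = x k → ⋯ → x 0 = v` forced if its
interior vertices have out-degree one. Some forced path with `k > 0` starts at a vertex `u` of
out-degree at least two: otherwise every vertex reachable along forced paths, hence every vertex,
has out-degree one except `v`, and `G` would have `n - 1` edges and be a tree. Reversing that path
leaves no sink, and `o` is recovered from the reversed orientation together with `(u, v)`: starting
from `v`, the path is traced by following the unique out-arc of each of its vertices in the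
reversed orientation until `u` is reached. This injects orientations with one sink into pairs
`u ≠ v` times sink-free orientations.
-/
open Finset

section Orientations

variable {V : Type*} {G : SimpleGraph V} {o o₁ o₂ : V → V → Bool} {a b v w : V}

namespace IsOrientation

lemma apply_swap_eq_false (ho : IsOrientation G o) (h : o a b = true) : o b a = false := by
  simpa [h] using ho.2 b a (ho.1 a b h).symm

lemma apply_or_apply_swap (ho : IsOrientation G o) (hab : G.Adj a b) :
    o a b = true ∨ o b a = true := by
  cases h : o b a <;> simp_all [ho.2 a b hab]

lemma not_isSink_iff (ho : IsOrientation G o) : ¬ IsSink G o w ↔ ∃ z, o w z = true := by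
  refine ⟨fun hw => ?_, fun ⟨z, hz⟩ hw => ?_⟩
  · simp only [IsSink, not_forall] at hw
    obtain ⟨z, hzw, hz⟩ := hw
    exact ⟨z, (ho.apply_or_apply_swap hzw.symm).resolve_right hz⟩
  · simpa [ho.apply_swap_eq_false hz] using hw z (ho.1 w z hz).symm

end IsOrientation

section OutDegree

variable [Fintype V]

def outDegree (o : V → V → Bool) (w : V) : ℕ := #{z | o w z = true}

lemma eq_of_outDegree_eq_one (h : outDegree o w = 1) (ha : o w a = true) (hb : o w b = true) :
    a = b :=
  card_le_one.1 h.le a (by simpa using ha) b (by simpa using hb)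

lemma outDegree_pos_iff : 0 < outDegree o w ↔ ∃ z, o w z = true := by
  simp [outDegree, card_pos, filter_nonempty_iff]

lemma IsOrientation.card_edgeSet (ho : IsOrientation G o) :
    Nat.card G.edgeSet = ∑ w, outDegree o w := by
  have arcsEquivEdges : {p : V × V // o p.1 p.2 = true} ≃ G.edgeSet := by
    refine Equiv.ofBijective (fun p => ⟨s(p.1.1, p.1.2), ho.1 _ _ p.2⟩) ⟨?_, ?_⟩
    · rintro ⟨⟨a, b⟩, hab⟩ ⟨⟨c, d⟩, hcd⟩ h
      rcases Sym2.eq_iff.1 (congrArg Subtype.val h) with ⟨rfl, rfl⟩ | ⟨rfl, rfl⟩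
      · rfl
      · simp [ho.apply_swap_eq_false hab] at hcd
    · rintro ⟨e, he⟩
      induction e using Sym2.ind with
      | _ a b =>
        rcases ho.apply_or_apply_swap he with h | h
        · exact ⟨⟨(a, b), h⟩, rfl⟩
        · exact ⟨⟨(b, a), h⟩, Subtype.ext Sym2.eq_swap⟩
  rw [← Nat.card_congr arcsEquivEdges,
    Nat.card_congr (Equiv.subtypeProdEquivSigmaSubtype fun a b => o a b = true), Nat.card_sigma]
  simp [outDegree, Fintype.card_subtype]

end OutDegree

section Reversal

open Classical in
noncomputable def reverseArcs (P : V → V → Prop) (o : V → V → Bool) : V → V → Bool :=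
  fun a b => if P a b then true else if P b a then false else o a b

variable {P : V → V → Prop}

lemma reverseArcs_of_rel (h : P a b) : reverseArcs P o a b = true := by
  simp [reverseArcs, h]

lemma reverseArcs_of_not_rel_swap (h : ¬ P b a) (hab : o a b = true) :
    reverseArcs P o a b = true := by
  unfold reverseArcs; split_ifs <;> simp_all

lemma rel_or_of_reverseArcs (h : reverseArcs P o a b = true) :
    P a b ∨ ¬ P b a ∧ o a b = true := by
  unfold reverseArcs at h; split_ifs at h <;> simp_all

lemma IsOrientation.reverseArcs (ho : IsOrientation G o) (hP : ∀ a b, P a b → o b a = true)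
    (hasymm : ∀ a b, P a b → ¬ P b a) : IsOrientation G (reverseArcs P o) := by
  refine ⟨fun a b h => ?_, fun a b hab => ?_⟩
  · rcases rel_or_of_reverseArcs h with h | ⟨-, h⟩
    · exact (ho.1 b a (hP a b h)).symm
    · exact ho.1 a b h
  · unfold _root_.reverseArcs
    by_cases h₁ : P a b
    · simp [h₁, hasymm a b h₁]
    · by_cases h₂ : P b a <;> simp [h₁, h₂, ho.2 a b hab]

lemma eq_of_reverseArcs_eq (ho₁ : IsOrientation G o₁) (ho₂ : IsOrientation G o₂)
    (hP₁ : ∀ a b, P a b → o₁ b a = true) (hP₂ : ∀ a b, P a b → o₂ b a = true)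
    (h : reverseArcs P o₁ = reverseArcs P o₂) : o₁ = o₂ := by
  funext a b
  by_cases hab : P a b
  · have hba := hP₁ a b hab
    rw [ho₁.apply_swap_eq_false hba, ho₂.apply_swap_eq_false (hP₂ a b hab)]
  by_cases hba : P b a
  · rw [hP₁ b a hba, hP₂ b a hba]
  simpa [_root_.reverseArcs, hab, hba] using congrFun₂ h a b

end Reversal

section ForcedPath

variable {k k₁ k₂ : ℕ} {x x₁ x₂ : ℕ → V}

/-- The arcs `x i → x (i + 1)`, `i < k`: those of the path `x k → ⋯ → x 0` reversed. -/
def PathArc (k : ℕ) (x : ℕ → V) (a b : V) : Prop := ∃ i < k, x i = a ∧ x (i + 1) = b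

lemma pathArc_congr (h : ∀ i ≤ k, x₁ i = x₂ i) : PathArc k x₁ = PathArc k x₂ := by
  funext a b
  exact propext <| exists_congr fun i => and_congr_right fun hi => by
    rw [h i hi.le, h (i + 1) hi]

lemma pathArc_asymm (hx : Set.InjOn x (Set.Iic k)) (hab : PathArc k x a b) :
    ¬ PathArc k x b a := by
  obtain ⟨i, hi, rfl, rfl⟩ := hab
  rintro ⟨j, hj, hji, hij⟩
  have h₁ : j = i + 1 := hx (Set.mem_Iic.2 hj.le) (Set.mem_Iic.2 hi) hji
  have h₂ : j + 1 = i := hx (Set.mem_Iic.2 hj) (Set.mem_Iic.2 hi.le) hij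
  omega

variable [Fintype V]

/-- `x k → x (k - 1) → ⋯ → x 0 = v` is a simple directed path whose interior vertices have
out-degree one; the values of `x` beyond `k` play no role. -/
structure IsForcedPath (o : V → V → Bool) (v : V) (k : ℕ) (x : ℕ → V) : Prop where
  start : x 0 = v
  injOn : Set.InjOn x (Set.Iic k)
  apply_succ : ∀ i < k, o (x (i + 1)) (x i) = true
  outDegree_eq_one : ∀ i, 0 < i → i < k → outDegree o (x i) = 1

namespace IsForcedPath

lemma nil : IsForcedPath o v 0 fun _ => v :=
  ⟨rfl, fun i hi j hj _ => by simp_all, by simp, by omega⟩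

lemma of_le (hp : IsForcedPath o v k x) {j : ℕ} (hj : j ≤ k) : IsForcedPath o v j x :=
  ⟨hp.start, hp.injOn.mono (Set.Iic_subset_Iic.2 hj), fun i hi => hp.apply_succ i (by omega),
    fun i hi₀ hi => hp.outDegree_eq_one i hi₀ (by omega)⟩

lemma snoc (hp : IsForcedPath o v k x) (hw : o w (x k) = true) (hnew : ∀ i ≤ k, x i ≠ w)
    (hdeg : k = 0 ∨ outDegree o (x k) = 1) :
    IsForcedPath o v (k + 1) (Function.update x (k + 1) w) := by
  have hx : ∀ i ≤ k, Function.update x (k + 1) w i = x i := fun i hi =>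
    Function.update_of_ne (by omega) _ _
  refine ⟨by rw [hx 0 (by omega), hp.start], ?_, fun i hi => ?_, fun i hi₀ hi => ?_⟩
  · have hEq : Set.EqOn x (Function.update x (k + 1) w) (Set.Iic k) := fun i hi => (hx i hi).symm
    rw [← Order.succ_eq_add_one, Order.Iic_succ, Set.injOn_insert (by simp),
      Order.succ_eq_add_one, ← hEq.image_eq, Function.update_self]
    exact ⟨hp.injOn.congr hEq, fun ⟨i, hi, hxi⟩ => hnew i hi hxi⟩
  · rcases (by omega : i < k ∨ i = k) with hi | rfl
    · rw [hx i (by omega), hx (i + 1) hi]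
      exact hp.apply_succ i hi
    · rw [hx i le_rfl, Function.update_self]
      exact hw
  · rw [hx i (by omega)]
    rcases (by omega : i < k ∨ i = k) with hi | rfl
    · exact hp.outDegree_eq_one i hi₀ hi
    · exact hdeg.resolve_left (by omega)

lemma apply_of_pathArc (hp : IsForcedPath o v k x) (h : PathArc k x a b) : o b a = true := by
  obtain ⟨i, hi, rfl, rfl⟩ := h
  exact hp.apply_succ i hi

lemma last_ne_start (hp : IsForcedPath o v k x) (hk : 0 < k) : x k ≠ v := fun h => by
  have := hp.injOn (Set.mem_Iic.2 le_rfl) (Set.mem_Iic.2 hk.le) (h.trans hp.start.symm)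
  omega

lemma isOrientation_reverseArcs (ho : IsOrientation G o) (hp : IsForcedPath o v k x) :
    IsOrientation G (reverseArcs (PathArc k x) o) :=
  ho.reverseArcs (fun _ _ => hp.apply_of_pathArc) fun _ _ => pathArc_asymm hp.injOn

lemma not_isSink_reverseArcs (ho : IsOrientation G o) (hp : IsForcedPath o v k x) (hk : 0 < k)
    (hdeg : 2 ≤ outDegree o (x k)) (huniq : ∀ w, IsSink G o w → w = v) (w : V) :
    ¬ IsSink G (reverseArcs (PathArc k x) o) w := by
  rw [(hp.isOrientation_reverseArcs ho).not_isSink_iff]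
  by_cases hw : ∃ i < k, x i = w
  · obtain ⟨i, hi, rfl⟩ := hw
    exact ⟨_, reverseArcs_of_rel ⟨i, hi, rfl, rfl⟩⟩
  by_cases hwk : x k = w
  · subst hwk
    obtain ⟨z, hz, hne⟩ := exists_mem_ne hdeg (x (k - 1))
    refine ⟨z, reverseArcs_of_not_rel_swap ?_ (by simpa using hz)⟩
    rintro ⟨j, hj, rfl, hjk⟩
    have : j + 1 = k := hp.injOn (Set.mem_Iic.2 hj) (Set.mem_Iic.2 le_rfl) hjk
    exact hne (by rw [← this, Nat.add_sub_cancel])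
  have hwv : w ≠ v := fun h => hw ⟨0, hk, hp.start.trans h.symm⟩
  obtain ⟨z, hz⟩ := ho.not_isSink_iff.1 fun h => hwv (huniq w h)
  refine ⟨z, reverseArcs_of_not_rel_swap ?_ hz⟩
  rintro ⟨j, hj, -, hjw⟩
  rcases (by omega : j + 1 < k ∨ j + 1 = k) with h | rfl
  · exact hw ⟨j + 1, h, hjw⟩
  · exact hwk hjw

lemma eq_succ_of_reverseArcs (ho : IsOrientation G o) (hp : IsForcedPath o v k x)
    (hv : IsSink G o v) {i : ℕ} (hi : i < k) {z : V}
    (hz : reverseArcs (PathArc k x) o (x i) z = true) : z = x (i + 1) := by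
  rcases rel_or_of_reverseArcs hz with ⟨j, hj, hji, rfl⟩ | ⟨hzi, hoz⟩
  · rw [hp.injOn (Set.mem_Iic.2 hj.le) (Set.mem_Iic.2 hi.le) hji]
  obtain _ | i := i
  · exact (ho.not_isSink_iff.2 ⟨z, hp.start ▸ hoz⟩ hv).elim
  have hprev := eq_of_outDegree_eq_one (hp.outDegree_eq_one (i + 1) (by omega) hi) hoz
    (hp.apply_succ i (by omega))
  exact (hzi ⟨i, by omega, hprev.symm, rfl⟩).elim

lemma eq_of_reverseArcs_eq (ho₁ : IsOrientation G o₁) (ho₂ : IsOrientation G o₂)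
    (hp₁ : IsForcedPath o₁ v k₁ x₁) (hp₂ : IsForcedPath o₂ v k₂ x₂)
    (hv₂ : IsSink G o₂ v) (hend : x₁ k₁ = x₂ k₂)
    (h : reverseArcs (PathArc k₁ x₁) o₁ = reverseArcs (PathArc k₂ x₂) o₂) :
    o₁ = o₂ := by
  have hagree : ∀ i, i ≤ k₁ → i ≤ k₂ → x₁ i = x₂ i := by
    intro i
    induction i with
    | zero => exact fun _ _ => hp₁.start.trans hp₂.start.symm
    | succ i ih =>
      intro h₁ h₂
      have harc : reverseArcs (PathArc k₁ x₁) o₁ (x₁ i) (x₁ (i + 1)) = true :=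
        reverseArcs_of_rel ⟨i, h₁, rfl, rfl⟩
      rw [h, ih (by omega) (by omega)] at harc
      exact hp₂.eq_succ_of_reverseArcs ho₂ hv₂ h₂ harc
  obtain rfl : k₁ = k₂ := by
    rcases le_total k₁ k₂ with hk | hk
    · exact hp₂.injOn (Set.mem_Iic.2 hk) (Set.mem_Iic.2 le_rfl)
        ((hagree k₁ le_rfl hk).symm.trans hend)
    · exact hp₁.injOn (Set.mem_Iic.2 le_rfl) (Set.mem_Iic.2 hk)
        (hend.trans (hagree k₂ hk le_rfl).symm)
  have hpath := pathArc_congr fun i hi => hagree i hi hi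
  rw [hpath] at h
  exact _root_.eq_of_reverseArcs_eq ho₁ ho₂
    (fun _ _ hab => hp₁.apply_of_pathArc (hpath ▸ hab)) (fun _ _ => hp₂.apply_of_pathArc) h

lemma exists_of_adj (ho : IsOrientation G o) (hv : IsSink G o v)
    (hone : ∀ k x, IsForcedPath o v k x → 0 < k → outDegree o (x k) = 1)
    (hp : IsForcedPath o v k x) (hadj : G.Adj w (x k)) :
    ∃ k' x', IsForcedPath o v k' x' ∧ x' k' = w := by
  rcases ho.apply_or_apply_swap hadj with hw | hw
  · by_cases hold : ∃ i ≤ k, x i = w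
    · obtain ⟨i, hi, hxi⟩ := hold
      exact ⟨i, x, hp.of_le hi, hxi⟩
    push Not at hold
    exact ⟨k + 1, _, hp.snoc hw hold ((Nat.eq_zero_or_pos k).imp_right (hone k x hp)),
      Function.update_self ..⟩
  · obtain _ | k := k
    · exact (ho.not_isSink_iff.2 ⟨w, hp.start ▸ hw⟩ hv).elim
    have hprev := eq_of_outDegree_eq_one (hone _ x hp (by omega)) hw (hp.apply_succ k (by omega))
    exact ⟨k, x, hp.of_le (by omega), hprev.symm⟩

end IsForcedPath

lemma exists_forcedPath (hconn : G.Connected) (hcyc : ¬ G.IsAcyclic) (ho : IsOrientation G o)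
    (hv : IsSink G o v) (huniq : ∀ w, IsSink G o w → w = v) :
    ∃ k x, IsForcedPath o v k x ∧ 0 < k ∧ 2 ≤ outDegree o (x k) := by
  classical
  by_contra! hshort
  have hone : ∀ k x, IsForcedPath o v k x → 0 < k → outDegree o (x k) = 1 := by
    intro k x hp hk
    have hpos := outDegree_pos_iff.2 <|
      ho.not_isSink_iff.1 fun h => hp.last_ne_start hk (huniq _ h)
    have := hshort k x hp hk
    omega
  have hreach : ∀ w, ∃ k x, IsForcedPath o v k x ∧ x k = w := by
    intro w
    induction (SimpleGraph.reachable_iff_reflTransGen w v).1 (hconn.preconnected w v)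
      using Relation.ReflTransGen.head_induction_on with
    | refl => exact ⟨0, _, IsForcedPath.nil, rfl⟩
    | head hadj _ ih =>
      obtain ⟨k, x, hp, rfl⟩ := ih
      exact hp.exists_of_adj ho hv hone hadj
  have hdeg : ∀ w, outDegree o w = if w = v then 0 else 1 := by
    intro w
    split_ifs with hw
    · subst hw
      rw [outDegree, card_eq_zero, filter_eq_empty_iff]
      exact fun z _ hz => ho.not_isSink_iff.2 ⟨z, hz⟩ hv
    · obtain ⟨k, x, hp, rfl⟩ := hreach w
      exact hone k x hp (Nat.pos_of_ne_zero fun hk => hw (hk ▸ hp.start))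
  apply hcyc
  refine (SimpleGraph.isTree_iff_connected_and_card.2 ⟨hconn, ?_⟩).isAcyclic
  rw [ho.card_edgeSet, Fintype.sum_congr _ _ hdeg]
  simpa [sum_ite, filter_ne'] using Nat.sub_add_cancel (Fintype.card_pos_iff.2 ⟨v⟩)

end ForcedPath

lemma card_subtype_fst_ne_snd [Fintype V] :
    Nat.card {p : V × V // p.1 ≠ p.2} = Fintype.card V * (Fintype.card V - 1) := by
  classical
  have hoff : (univ : Finset V).offDiag = univ.filter fun p : V × V => p.1 ≠ p.2 := by ext; simp
  rw [Nat.card_eq_fintype_card, Fintype.card_subtype, ← hoff, offDiag_card, card_univ,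
    Nat.mul_sub_one]

end Orientations

theorem stmt5 {V : Type*} [Fintype V] (G : SimpleGraph V)
    (hconn : G.Connected) (hcyc : ¬ G.IsAcyclic) :
    Nat.card {o : V → V → Bool // IsOrientation G o ∧ ∃! v, IsSink G o v}
      ≤ Fintype.card V * (Fintype.card V - 1) *
        Nat.card {o : V → V → Bool // IsOrientation G o ∧ ∀ v, ¬ IsSink G o v} := by
  have hpath (o : {o : V → V → Bool // IsOrientation G o ∧ ∃! v, IsSink G o v}) :
      ∃ v k x, IsSink G o.1 v ∧ (∀ w, IsSink G o.1 w → w = v) ∧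
        IsForcedPath o.1 v k x ∧ 0 < k ∧ 2 ≤ outDegree o.1 (x k) := by
    obtain ⟨o, ho, v, hv, huniq⟩ := o
    obtain ⟨k, x, hx⟩ := exists_forcedPath hconn hcyc ho hv huniq
    exact ⟨v, k, x, hv, huniq, hx⟩
  choose v k x hsink huniq hp hk hdeg using hpath
  let F (o : {o : V → V → Bool // IsOrientation G o ∧ ∃! v, IsSink G o v}) :
      {p : V × V // p.1 ≠ p.2} ×
        {o : V → V → Bool // IsOrientation G o ∧ ∀ v, ¬ IsSink G o v} :=
    (⟨(x o (k o), v o), (hp o).last_ne_start (hk o)⟩,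
      ⟨reverseArcs (PathArc (k o) (x o)) o.1, (hp o).isOrientation_reverseArcs o.2.1,
        (hp o).not_isSink_reverseArcs o.2.1 (hk o) (hdeg o) (huniq o)⟩)
  have hF : F.Injective := by
    intro o₁ o₂ h
    simp only [F, Prod.mk.injEq, Subtype.mk.injEq] at h
    obtain ⟨⟨hend, hv⟩, hrev⟩ := h
    exact Subtype.ext <|
      (hp o₁).eq_of_reverseArcs_eq o₁.2.1 o₂.2.1 (hv ▸ hp o₂) (hv ▸ hsink o₂) hend
        hrev
  calc _ ≤ Nat.card ({p : V × V // p.1 ≠ p.2} ×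
        {o : V → V → Bool // IsOrientation G o ∧ ∀ v, ¬ IsSink G o v}) :=
        Nat.card_le_card_of_injective F hF
    _ = _ := by rw [Nat.card_prod, card_subtype_fst_ne_snd]
end

section
/- Let G be a connected graph on n vertices with m edges and let r be a fixed root vertex. An arrow assignment assigns to each vertex v ≠ r one of its neighbors s(v). Let Z_0 be the number of arrow assignments whose edge set {(v, s(v)) : v ≠ r} forms a directed spanning tree oriented toward r, and Z_1 the number of arrow assignments forming a unicyclic subgraph (containing exactly one directed cycle, with the component of r being a tree rooted at r). Then Z_1 ≤ m·n·Z_0. -/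
/-- An arrow assignment for graph `G` with root `r`: each vertex `v ≠ r` points to a
neighbour `s v`, and we set `s r = r` by convention. -/
def IsArrow {V : Type*} (G : SimpleGraph V) (r : V) (s : V → V) : Prop :=
  s r = r ∧ ∀ v, v ≠ r → G.Adj v (s v)

/-- The arrow assignment forms a spanning tree oriented toward `r`: following successors
from any vertex reaches the root. -/
def ReachesRoot {V : Type*} (r : V) (s : V → V) : Prop := ∀ v, ∃ k, s^[k] v = r

/-- `v` lies on a directed cycle (not through the root). -/
def OnCycle {V : Type*} (r : V) (s : V → V) (v : V) : Prop :=
  v ≠ r ∧ ∃ k, 0 < k ∧ s^[k] v = v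

/-- The functional graph of `s` contains exactly one directed cycle: some vertex is on a
cycle, and any two cycle vertices lie on the same cycle. -/
def OneCycle {V : Type*} (r : V) (s : V → V) : Prop :=
  (∃ v, OnCycle r s v) ∧ ∀ u v, OnCycle r s u → OnCycle r s v → ∃ k, s^[k] u = v

/-!
Send each unicyclic assignment `s` to a spanning tree as follows. Since `G` is connected, some
vertex `u` that does not reach `r` is adjacent to a vertex `w` that does. The orbit of `u` runs
along a path `u, s u, …, s^[K] u` and closes with the edge `e` from `s^[K] u` back into the
path. Reversing the arrows of that path and pointing `u` at `w` yields a tree `t`. The triple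
`(e, u, t)` determines `s`: the endpoint of `e` farther from `u` along `t` is `s^[K] u`, and `s`
is recovered by reversing the `t`-path from it to `u`.
-/

open Function Set

section

variable {α : Type*}

lemma iterate_eq_iterate_of_forall_lt {f g : α → α} {x : α} {k : ℕ}
    (h : ∀ j < k, f (g^[j] x) = g (g^[j] x)) : f^[k] x = g^[k] x := by
  induction k with
  | zero => rfl
  | succ k ih =>
    rw [iterate_succ_apply', iterate_succ_apply', ih fun j hj => h j (by omega)]
    exact h k (by omega)

def IsFirstHit (f : α → α) (x y : α) (n : ℕ) : Prop :=
  f^[n] x = y ∧ ∀ k < n, f^[k] x ≠ y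

lemma IsFirstHit.unique {f : α → α} {x y : α} {m n : ℕ} (hm : IsFirstHit f x y m)
    (hn : IsFirstHit f x y n) : m = n := by
  rcases lt_trichotomy m n with h | h | h
  · exact absurd hm.1 (hn.2 m h)
  · exact h
  · exact absurd hn.1 (hm.2 n h)

lemma exists_rho [Finite α] (f : α → α) (x : α) :
    ∃ K a, a ≤ K ∧ InjOn (fun i => f^[i] x) (Iic K) ∧ f^[K + 1] x = f^[a] x := by
  classical
  have hrep : ∃ n, ∃ i < n, f^[i] x = f^[n] x := by
    obtain ⟨i, n, hin, he⟩ :=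
      Set.finite_univ.exists_lt_map_eq_of_forall_mem (f := fun n => f^[n] x) fun _ => mem_univ _
    exact ⟨n, i, hin, he⟩
  obtain ⟨a, ha, he⟩ := Nat.find_spec hrep
  obtain ⟨K, hK⟩ : ∃ K, Nat.find hrep = K + 1 := Nat.exists_eq_add_one_of_ne_zero (by omega)
  refine ⟨K, a, by omega, fun i hi j hj hij => ?_, by rw [← hK, he]⟩
  simp only [mem_Iic] at hi hj
  by_contra hne
  rcases Nat.lt_or_gt_of_ne hne with h | h
  · exact Nat.find_min hrep (by omega) ⟨i, h, hij⟩
  · exact Nat.find_min hrep (by omega) ⟨j, h, hij.symm⟩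

lemma iterate_mem_of_rho {f : α → α} {x : α} {K a : ℕ} (haK : a ≤ K)
    (hrho : f^[K + 1] x = f^[a] x) (j : ℕ) : ∃ i ≤ K, f^[i] x = f^[j] x := by
  induction j with
  | zero => exact ⟨0, Nat.zero_le _, rfl⟩
  | succ j ih =>
    obtain ⟨i, hi, he⟩ := ih
    rw [iterate_succ_apply', ← he, ← iterate_succ_apply' f]
    rcases hi.lt_or_eq with hi | rfl
    · exact ⟨i + 1, hi, rfl⟩
    · exact ⟨a, haK, hrho.symm⟩

lemma Nat.card_le_card_of_forall_exists {β : Type*} [Finite β] (R : α → β → Prop)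
    (hex : ∀ x, ∃ y, R x y) (huniq : ∀ x₁ x₂ y, R x₁ y → R x₂ y → x₁ = x₂) :
    Nat.card α ≤ Nat.card β := by
  choose f hf using hex
  exact Nat.card_le_card_of_injective f fun x₁ x₂ h => huniq x₁ x₂ _ (hf x₁) (h ▸ hf x₂)

end

namespace ArrowAssignment

variable {V : Type*} {r : V} {s : V → V}

def Reaches (r : V) (s : V → V) (v : V) : Prop := ∃ k, s^[k] v = r

lemma Reaches.of_iterate {v : V} {m : ℕ} (h : Reaches r s (s^[m] v)) : Reaches r s v := by
  obtain ⟨k, hk⟩ := h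
  exact ⟨k + m, by rw [iterate_add_apply, hk]⟩

lemma Reaches.iterate (hr : s r = r) {v : V} (h : Reaches r s v) (m : ℕ) :
    Reaches r s (s^[m] v) := by
  obtain ⟨k, hk⟩ := h
  exact ⟨k, by rw [← iterate_add_apply, add_comm, iterate_add_apply, hk, iterate_fixed hr]⟩

lemma not_reaches_of_onCycle (hr : s r = r) {v : V} (hv : OnCycle r s v) : ¬ Reaches r s v := by
  obtain ⟨hvr, k, hk, hkv⟩ := hv
  rintro ⟨j, hj⟩
  obtain ⟨n, hn⟩ := Nat.exists_eq_add_of_le (Nat.le_mul_of_pos_left j hk)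
  have hroot : s^[k * j] v = r := by rw [hn, add_comm, iterate_add_apply, hj, iterate_fixed hr]
  exact hvr ((IsPeriodicPt.mul_const (show IsPeriodicPt s k v from hkv) j).eq.symm.trans hroot)

lemma onCycle_of_rho {u : V} {K a : ℕ} (hu : ¬ Reaches r s u) (haK : a ≤ K)
    (hrho : s^[K + 1] u = s^[a] u) : OnCycle r s (s^[a] u) :=
  ⟨fun h => hu (Reaches.of_iterate ⟨0, h⟩), K + 1 - a, by omega, by
    rw [← iterate_add_apply, Nat.sub_add_cancel (by omega), hrho]⟩

lemma exists_onCycle_of_not_reaches [Finite V] {v : V} (hv : ¬ Reaches r s v) :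
    ∃ m, OnCycle r s (s^[m] v) := by
  obtain ⟨K, a, haK, -, hrho⟩ := exists_rho s v
  exact ⟨a, onCycle_of_rho hv haK hrho⟩

/-- Reverse the path `u, s u, …, s^[K] u` and send `u` to `w`; elsewhere agree with `s`. -/
noncomputable def reroute (s : V → V) (u w : V) (K : ℕ) (z : V) : V :=
  open Classical in
  if h : ∃ i ≤ K, s^[i] u = z then
    if Nat.find h = 0 then w else s^[Nat.find h - 1] u
  else s z

section Reroute

variable {u w : V} {K : ℕ}

lemma reroute_of_forall_ne {z : V} (hz : ∀ i ≤ K, s^[i] u ≠ z) : reroute s u w K z = s z := by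
  rw [reroute, dif_neg]
  rintro ⟨i, hi, rfl⟩
  exact hz i hi rfl

variable (hinj : InjOn (fun i => s^[i] u) (Iic K))
include hinj

open Classical in
lemma reroute_iterate {i : ℕ} (hi : i ≤ K) :
    reroute s u w K (s^[i] u) = if i = 0 then w else s^[i - 1] u := by
  have h : ∃ j ≤ K, s^[j] u = s^[i] u := ⟨i, hi, rfl⟩
  have hfind : Nat.find h = i := (Nat.find_eq_iff h).2
    ⟨⟨hi, rfl⟩, fun j hj ⟨hjK, he⟩ => hj.ne (hinj (mem_Iic.2 hjK) (mem_Iic.2 hi) he)⟩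
  rw [reroute, dif_pos h, hfind]

lemma reroute_self : reroute s u w K u = w := by
  simpa using reroute_iterate (w := w) hinj (Nat.zero_le K)

lemma iterate_reroute {i k : ℕ} (hk : k ≤ i) (hi : i ≤ K) :
    (reroute s u w K)^[k] (s^[i] u) = s^[i - k] u := by
  induction k with
  | zero => rfl
  | succ k ih =>
    rw [iterate_succ_apply', ih (by omega), reroute_iterate hinj (by omega), if_neg (by omega),
      Nat.sub_sub]

lemma isFirstHit_reroute {i : ℕ} (hi : i ≤ K) :
    IsFirstHit (reroute s u w K) (s^[i] u) u i := by
  refine ⟨by simpa using iterate_reroute (w := w) hinj le_rfl hi, fun k hk he => ?_⟩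
  rw [iterate_reroute hinj hk.le hi] at he
  have := hinj (mem_Iic.2 (by omega : i - k ≤ K)) (mem_Iic.2 (Nat.zero_le K)) he
  omega

end Reroute

section Decoding

variable {s₁ s₂ : V → V} {u w₁ w₂ : V} {K a : ℕ}

lemma eq_of_reroute_eq (haK : a ≤ K) (horbit : ∀ i ≤ K, s₁^[i] u = s₂^[i] u)
    (hrho₁ : s₁^[K + 1] u = s₁^[a] u) (hrho₂ : s₂^[K + 1] u = s₂^[a] u)
    (ht : reroute s₁ u w₁ K = reroute s₂ u w₂ K) : s₁ = s₂ := by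
  funext z
  by_cases hz : ∃ i ≤ K, s₁^[i] u = z
  · obtain ⟨i, hi, rfl⟩ := hz
    calc s₁ (s₁^[i] u) = s₁^[i + 1] u := (iterate_succ_apply' s₁ i u).symm
      _ = s₂^[i + 1] u := by
        rcases hi.lt_or_eq with hi | rfl
        · exact horbit (i + 1) hi
        · rw [hrho₁, hrho₂, horbit a haK]
      _ = s₂ (s₁^[i] u) := by rw [iterate_succ_apply', horbit i hi]
  · push Not at hz
    have hz₂ : ∀ i ≤ K, s₂^[i] u ≠ z := fun i hi => horbit i hi ▸ hz i hi
    rw [← reroute_of_forall_ne (w := w₁) hz, ht, reroute_of_forall_ne hz₂]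

end Decoding

/-- `t` is `s` with the orbit of `u` rerouted; `e` is the dropped edge closing that orbit. -/
def IsRerouting (s t : V → V) (e : Sym2 V) (u : V) : Prop :=
  ∃ K a w, a < K ∧ InjOn (fun i => s^[i] u) (Iic K) ∧ s^[K + 1] u = s^[a] u ∧
    e = s(s^[K] u, s^[a] u) ∧ t = reroute s u w K

/-- `s^[K] u` is the endpoint of `e` whose `t`-path to `u` is longer, so `(t, e, u)`
determines `s`. -/
lemma IsRerouting.unique {s₁ s₂ t : V → V} {e : Sym2 V} {u : V} (h₁ : IsRerouting s₁ t e u)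
    (h₂ : IsRerouting s₂ t e u) : s₁ = s₂ := by
  obtain ⟨K₁, a₁, w₁, ha₁, hinj₁, hrho₁, rfl, rfl⟩ := h₁
  obtain ⟨K₂, a₂, w₂, ha₂, hinj₂, hrho₂, he, ht⟩ := h₂
  have hfirst₁ {i} (hi : i ≤ K₁) := isFirstHit_reroute (w := w₁) hinj₁ hi
  have hfirst₂ {i} (hi : i ≤ K₂) := ht ▸ isFirstHit_reroute (w := w₂) hinj₂ hi
  rcases Sym2.eq_iff.1 he with ⟨hx, hy⟩ | ⟨hx, hy⟩
  · obtain rfl : K₁ = K₂ := (hfirst₁ le_rfl).unique (hx ▸ hfirst₂ le_rfl)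
    obtain rfl : a₁ = a₂ := (hfirst₁ ha₁.le).unique (hy ▸ hfirst₂ ha₂.le)
    refine eq_of_reroute_eq ha₁.le (fun i hi => ?_) hrho₁ hrho₂ ht
    rw [← Nat.sub_sub_self hi, ← iterate_reroute (w := w₁) hinj₁ (Nat.sub_le K₁ i) le_rfl, hx, ht,
      iterate_reroute hinj₂ (Nat.sub_le K₁ i) le_rfl]
  · have := (hfirst₁ le_rfl).unique (hx ▸ hfirst₂ ha₂.le)
    have := (hfirst₁ ha₁.le).unique (hy ▸ hfirst₂ le_rfl)
    omega

section Encoding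

variable {u w : V} {K a : ℕ}

lemma isArrow_reroute {G : SimpleGraph V} (hs : IsArrow G r s) (huw : G.Adj u w)
    (hinj : InjOn (fun i => s^[i] u) (Iic K)) (hpath : ∀ i ≤ K, s^[i] u ≠ r) :
    IsArrow G r (reroute s u w K) := by
  refine ⟨by rw [reroute_of_forall_ne hpath, hs.1], fun v hv => ?_⟩
  by_cases hz : ∃ i ≤ K, s^[i] u = v
  · obtain ⟨i, hi, rfl⟩ := hz
    rw [reroute_iterate hinj hi]
    split_ifs with h0
    · rwa [h0]
    · obtain ⟨j, rfl⟩ := Nat.exists_eq_add_one_of_ne_zero h0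
      rw [Nat.add_sub_cancel, iterate_succ_apply']
      exact (hs.2 _ (hpath j (by omega))).symm
  · push Not at hz
    rw [reroute_of_forall_ne hz]
    exact hs.2 v hv

/-- Vertices that reached `r` still do along the same path, the reversed path leads to `w`, and
by uniqueness of the cycle every other vertex runs into the reversed path. -/
lemma reachesRoot_reroute [Finite V] (hr : s r = r) (hcyc : OneCycle r s)
    (hu : ¬ Reaches r s u) (hw : Reaches r s w) (haK : a ≤ K)
    (hinj : InjOn (fun i => s^[i] u) (Iic K)) (hrho : s^[K + 1] u = s^[a] u) :
    ReachesRoot r (reroute s u w K) := by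
  have hagree {v : V} {k : ℕ} (h : ∀ j < k, ∀ i ≤ K, s^[i] u ≠ s^[j] v) :
      (reroute s u w K)^[k] v = s^[k] v :=
    iterate_eq_iterate_of_forall_lt fun j hj => reroute_of_forall_ne (h j hj)
  have hgood {v : V} (hv : Reaches r s v) : Reaches r (reroute s u w K) v := by
    obtain ⟨k, hk⟩ := hv
    refine ⟨k, (hagree fun j _ i _ he => hu ?_).trans hk⟩
    exact Reaches.of_iterate (m := i) (he ▸ Reaches.iterate hr ⟨k, hk⟩ j)
  have hpath {i : ℕ} (hi : i ≤ K) : Reaches r (reroute s u w K) (s^[i] u) := by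
    obtain ⟨k, hk⟩ := hgood hw
    refine ⟨k + (i + 1), ?_⟩
    rw [iterate_add_apply, iterate_succ_apply', iterate_reroute hinj le_rfl hi, Nat.sub_self,
      iterate_zero_apply, reroute_self hinj, hk]
  intro v
  by_cases hv : Reaches r s v
  · exact hgood hv
  have hhit : ∃ m, ∃ i ≤ K, s^[i] u = s^[m] v := by
    obtain ⟨m, hm⟩ := exists_onCycle_of_not_reaches hv
    obtain ⟨k, hk⟩ := hcyc.2 _ _ (onCycle_of_rho hu haK hrho) hm
    obtain ⟨i, hi, he⟩ := iterate_mem_of_rho haK hrho (k + a)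
    exact ⟨m, i, hi, by rw [he, iterate_add_apply, hk]⟩
  classical
  obtain ⟨i, hi, he⟩ := Nat.find_spec hhit
  have hfirst := hagree fun j hj i hi he => Nat.find_min hhit hj ⟨i, hi, he⟩
  exact Reaches.of_iterate (hfirst ▸ he ▸ hpath hi)

/-- Reroute from a vertex `u` that does not reach `r` but is adjacent to one that does. -/
theorem exists_isRerouting [Finite V] {G : SimpleGraph V} (hconn : G.Connected)
    (hs : IsArrow G r s) (hcyc : OneCycle r s) :
    ∃ e ∈ G.edgeSet, ∃ u t, IsArrow G r t ∧ ReachesRoot r t ∧ IsRerouting s t e u := by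
  obtain ⟨v, hv⟩ := hcyc.1
  obtain ⟨d, -, hu, hw⟩ := (hconn.preconnected v r).some.exists_boundary_dart
    {z | ¬ Reaches r s z} (not_reaches_of_onCycle hs.1 hv) (not_not.2 ⟨0, rfl⟩)
  obtain ⟨K, a, haK, hinj, hrho⟩ := exists_rho s d.fst
  have hpath (i : ℕ) : s^[i] d.fst ≠ r := fun h => hu (Reaches.of_iterate ⟨0, h⟩)
  have hclose : G.Adj (s^[K] d.fst) (s^[a] d.fst) := by
    rw [← hrho, iterate_succ_apply']
    exact hs.2 _ (hpath K)
  have hKa : a < K := haK.lt_of_ne fun h => G.loopless.irrefl _ (h ▸ hclose)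
  exact ⟨_, hclose, d.fst, _, isArrow_reroute hs d.adj hinj fun i _ => hpath i,
    reachesRoot_reroute hs.1 hcyc hu (not_not.1 hw) haK hinj hrho, K, a, d.snd, hKa, hinj, hrho,
    rfl, rfl⟩

end Encoding

end ArrowAssignment

theorem stmt7 {V : Type*} [Fintype V] [DecidableEq V] (G : SimpleGraph V)
    [DecidableRel G.Adj] (hconn : G.Connected) (r : V) :
    Nat.card {s : V → V // IsArrow G r s ∧ OneCycle r s}
      ≤ G.edgeFinset.card * Fintype.card V *
        Nat.card {s : V → V // IsArrow G r s ∧ ReachesRoot r s} := by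
  calc Nat.card {s : V → V // IsArrow G r s ∧ OneCycle r s}
      ≤ Nat.card (G.edgeSet × V × {t : V → V // IsArrow G r t ∧ ReachesRoot r t}) := by
        refine Nat.card_le_card_of_forall_exists
          (fun s p => ArrowAssignment.IsRerouting s.1 p.2.2.1 p.1 p.2.1) (fun ⟨s, hs, hcyc⟩ => ?_)
          fun s₁ s₂ p h₁ h₂ => Subtype.ext (h₁.unique h₂)
        obtain ⟨e, he, u, t, ht, hroot, hre⟩ := ArrowAssignment.exists_isRerouting hconn hs hcyc
        exact ⟨⟨⟨e, he⟩, u, t, ht, hroot⟩, hre⟩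
    _ = G.edgeFinset.card * Fintype.card V *
          Nat.card {s : V → V // IsArrow G r s ∧ ReachesRoot r s} := by
        rw [Nat.card_prod, Nat.card_prod, Nat.card_eq_fintype_card (α := G.edgeSet),
          ← SimpleGraph.edgeFinset_card, Nat.card_eq_fintype_card (α := V), mul_assoc]
end

section
/- (Boundary events are blocked.) With the resampling-set algorithm as above, for any assignment σ and any i ∈ ∂Res(σ), the event A_i is inconsistent with the restriction of σ to vbl(Res(σ)); i.e., no assignment in A_i agrees with σ on vbl(A_i) ∩ vbl(Res(σ)). -/
open Finset
open scoped Classical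

/-- Variables used by a set of events. -/
noncomputable def vblSet {n m : ℕ} (vbl : Fin m → Finset (Fin n))
    (S : Finset (Fin m)) : Finset (Fin n) :=
  S.biUnion vbl

/-- The set of (indices of) events occurring under assignment `σ`. -/
noncomputable def badSet {n m : ℕ} {D : Fin n → Type*}
    (A : Fin m → Set (∀ i, D i)) (σ : ∀ i, D i) : Finset (Fin m) :=
  Finset.univ.filter fun j => σ ∈ A j

/-- The boundary of `S` in the dependency graph: events outside `S` sharing a variable
with some event of `S`. -/
noncomputable def bdry {n m : ℕ} (vbl : Fin m → Finset (Fin n))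
    (S : Finset (Fin m)) : Finset (Fin m) :=
  Finset.univ.filter fun j => j ∉ S ∧ ∃ k ∈ S, (vbl j ∩ vbl k).Nonempty

/-- `A j` is consistent with the restriction of `σ` to the variables of `S`: some full
assignment in `A j` agrees with `σ` on `vbl j ∩ vblSet vbl S`. -/
def consistentOn {n m : ℕ} {D : Fin n → Type*} (A : Fin m → Set (∀ i, D i))
    (vbl : Fin m → Finset (Fin n)) (σ : ∀ i, D i) (S : Finset (Fin m)) (j : Fin m) : Prop :=
  ∃ τ ∈ A j, ∀ i ∈ vbl j ∩ vblSet vbl S, τ i = σ i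

/-- One round of the resampling-set algorithm: add all boundary events consistent with
the current restriction of `σ`. -/
noncomputable def resStep {n m : ℕ} {D : Fin n → Type*} (A : Fin m → Set (∀ i, D i))
    (vbl : Fin m → Finset (Fin n)) (σ : ∀ i, D i) (R : Finset (Fin m)) : Finset (Fin m) :=
  R ∪ (bdry vbl R).filter (consistentOn A vbl σ R)

/-- The resampling set `Res(σ)`: iterate the growing step (it stabilises within `m`
rounds) starting from the set of occurring bad events. -/
noncomputable def resSet {n m : ℕ} {D : Fin n → Type*} (A : Fin m → Set (∀ i, D i))
    (vbl : Fin m → Finset (Fin n)) (σ : ∀ i, D i) : Finset (Fin m) :=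
  (resStep A vbl σ)^[m] (badSet A σ)


lemma iterate_fixed_of_mono {m : ℕ} (f : Finset (Fin m) → Finset (Fin m))
    (hf : ∀ R, R ⊆ f R) (S : Finset (Fin m)) :
    f (f^[m] S) = f^[m] S := by
  by_cases h : ∃ k < m, f (f^[k] S) = f^[k] S
  · obtain ⟨k, hk, hfix⟩ := h
    have : f^[m] S = f^[k] S := by
      have : f^[m - k] (f^[k] S) = f^[k] S := Function.iterate_fixed hfix _
      rw [← Function.iterate_add_apply, Nat.sub_add_cancel hk.le] at this
      exact this
    rw [this, hfix]
  · push_neg at h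
    have key : ∀ k ≤ m, k ≤ (f^[k] S).card := by
      intro k hk
      induction k with
      | zero => simp
      | succ k ih =>
        have hlt : (f^[k] S).card < (f^[k+1] S).card := by
          rw [Function.iterate_succ_apply']
          exact Finset.card_lt_card (Finset.ssubset_iff_subset_ne.mpr
            ⟨hf _, fun he => h k (Nat.lt_of_succ_le hk) he.symm⟩)
        exact Nat.succ_le_of_lt (lt_of_le_of_lt (ih (Nat.le_of_succ_le hk)) hlt)
    have huniv : f^[m] S = Finset.univ := by
      apply Finset.eq_univ_of_card
      have h1 := key m le_rfl
      have h2 : (f^[m] S).card ≤ m := by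
        simpa using Finset.card_le_card (Finset.subset_univ (f^[m] S))
      simpa using le_antisymm h2 h1
    rw [huniv]
    exact le_antisymm (Finset.subset_univ _) (hf _)

theorem stmt10 {n m : ℕ} {D : Fin n → Type*} (A : Fin m → Set (∀ i, D i))
    (vbl : Fin m → Finset (Fin n))
    (hdet : ∀ (j : Fin m) (σ τ : ∀ i, D i),
      (∀ i ∈ vbl j, σ i = τ i) → (σ ∈ A j ↔ τ ∈ A j))
    (σ : ∀ i, D i) :
    ∀ j ∈ bdry vbl (resSet A vbl σ), ¬ consistentOn A vbl σ (resSet A vbl σ) j := by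
  intro j hj hcons
  have hfix : resStep A vbl σ (resSet A vbl σ) = resSet A vbl σ :=
    iterate_fixed_of_mono (resStep A vbl σ)
      (fun R => Finset.subset_union_left) (badSet A σ)
  have hjn : j ∉ resSet A vbl σ := by
    simp only [bdry, Finset.mem_filter] at hj
    exact hj.2.1
  apply hjn
  rw [← hfix]
  exact Finset.mem_union_right _ (Finset.mem_filter.mpr ⟨hj, hcons⟩)
end

section
/- (Conditional probability bound under the local lemma condition.) Let A_1,...,A_m be events in a probability space with dependency graph G (A_i independent of the collection {A_j : j ∉ Γ⁺(i)}), and suppose there exist x_i ∈ [0,1) with Pr(A_i) ≤ x_i ∏_{j∈Γ(i)} (1-x_j) for all i. Then for any event E and any S ⊆ [m], Pr(E | ∧_{i∈S} ¬A_i) ≤ Pr(E) · ∏_{i∈Γ(E)∩S} (1-x_i)^{-1}, where Γ(E) is the set of indices j with vbl(A_j)∩vbl(E) ≠ ∅ and E is independent of all A_j with j ∉ Γ(E). -/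
open MeasureTheory Finset

section
variable {Ω : Type*} [MeasurableSpace Ω] {μ : Measure Ω} [IsProbabilityMeasure μ]
  {m : ℕ} {A : Fin m → Set Ω} {Γ : Fin m → Finset (Fin m)} {x : Fin m → ℝ}

private lemma lll_meas (hA : ∀ i, MeasurableSet (A i)) (S : Finset (Fin m)) :
    MeasurableSet (⋂ j ∈ S, (A j)ᶜ) :=
  MeasurableSet.biInter (S.countable_toSet) (fun j _ => (hA j).compl)

private lemma lll_split (hA : ∀ i, MeasurableSet (A i)) (i : Fin m) (T : Finset (Fin m)) :
    (μ (A i ∩ ⋂ j ∈ T, (A j)ᶜ)).toReal + (μ (⋂ j ∈ insert i T, (A j)ᶜ)).toReal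
      = (μ (⋂ j ∈ T, (A j)ᶜ)).toReal := by
  classical
  have h1 : (⋂ j ∈ insert i T, (A j)ᶜ) = (⋂ j ∈ T, (A j)ᶜ) \ A i := by
    rw [Finset.set_biInter_insert]
    rw [Set.diff_eq, Set.inter_comm]
  have h2 : A i ∩ ⋂ j ∈ T, (A j)ᶜ = (⋂ j ∈ T, (A j)ᶜ) ∩ A i := Set.inter_comm _ _
  rw [h1, h2, ← ENNReal.toReal_add (measure_ne_top μ _) (measure_ne_top μ _),
    measure_inter_add_diff _ (hA i)]

private lemma lll_mono (S T : Finset (Fin m)) (h : S ⊆ T) (s : Set Ω) :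
    (μ (s ∩ ⋂ j ∈ T, (A j)ᶜ)).toReal ≤ (μ (s ∩ ⋂ j ∈ S, (A j)ᶜ)).toReal :=
  ENNReal.toReal_mono (measure_ne_top μ _)
    (measure_mono (Set.inter_subset_inter_right _ (Set.biInter_subset_biInter_left h)))

private lemma lll_core (hA : ∀ i, MeasurableSet (A i))
    (hindA : ∀ (i : Fin m) (S : Finset (Fin m)), (∀ j ∈ S, j ≠ i ∧ j ∉ Γ i) →
      μ (A i ∩ ⋂ j ∈ S, (A j)ᶜ) = μ (A i) * μ (⋂ j ∈ S, (A j)ᶜ))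
    (hx0 : ∀ i, 0 ≤ x i) (hx1 : ∀ i, x i < 1)
    (hlll : ∀ i, (μ (A i)).toReal ≤ x i * ∏ j ∈ Γ i, (1 - x j)) :
    ∀ S : Finset (Fin m),
      (∀ i, (μ (A i ∩ ⋂ j ∈ S, (A j)ᶜ)).toReal
          ≤ x i * (μ (⋂ j ∈ S, (A j)ᶜ)).toReal) ∧
      ∏ j ∈ S, (1 - x j) ≤ (μ (⋂ j ∈ S, (A j)ᶜ)).toReal := by
  classical
  intro S
  induction S using Finset.strongInduction with
  | _ S ih =>
    have hx1' : ∀ i, 0 < 1 - x i := fun i => by linarith [hx1 i]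
    have hPnonneg : ∀ T : Finset (Fin m), 0 ≤ (μ (⋂ j ∈ T, (A j)ᶜ)).toReal :=
      fun T => ENNReal.toReal_nonneg
    -- part (a)
    have parta : ∀ i, (μ (A i ∩ ⋂ j ∈ S, (A j)ᶜ)).toReal
        ≤ x i * (μ (⋂ j ∈ S, (A j)ᶜ)).toReal := by
      intro i
      by_cases hiS : i ∈ S
      · have hempty : A i ∩ ⋂ j ∈ S, (A j)ᶜ = ∅ := by
          apply Set.eq_empty_of_subset_empty
          intro ω hω
          exact (Set.mem_iInter₂.mp hω.2 i hiS) hω.1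
        rw [hempty]
        simp only [measure_empty, ENNReal.toReal_zero]
        exact mul_nonneg (hx0 i) (hPnonneg S)
      · set S₁ : Finset (Fin m) := S ∩ Γ i with hS₁
        set S₂ : Finset (Fin m) := S \ Γ i with hS₂
        have hS₁S : S₁ ⊆ S := Finset.inter_subset_left
        have hS₂S : S₂ ⊆ S := Finset.sdiff_subset
        have hunion : S₁ ∪ S₂ = S := by
          ext k; simp only [hS₁, hS₂, Finset.mem_union, Finset.mem_inter, Finset.mem_sdiff]; tauto
        -- sub-induction: denominator bound
        have hden : ∀ T : Finset (Fin m), T ⊆ S₁ →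
            (∏ j ∈ T, (1 - x j)) * (μ (⋂ j ∈ S₂, (A j)ᶜ)).toReal
              ≤ (μ (⋂ j ∈ T ∪ S₂, (A j)ᶜ)).toReal := by
          intro T
          induction T using Finset.induction with
          | empty => intro _; simp
          | @insert a T ha ihT =>
            intro hsub
            have haS₁ : a ∈ S₁ := hsub (Finset.mem_insert_self a T)
            have hTS₁ : T ⊆ S₁ := fun b hb => hsub (Finset.mem_insert_of_mem hb)
            have haTS₂ : a ∉ T ∪ S₂ := by
              simp only [Finset.mem_union, not_or]
              refine ⟨ha, ?_⟩
              intro haS₂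
              exact (Finset.mem_sdiff.mp haS₂).2 (Finset.mem_inter.mp haS₁).2
            have hTS₂sub : T ∪ S₂ ⊂ S := by
              refine Finset.ssubset_iff_of_subset (Finset.union_subset (hTS₁.trans hS₁S) hS₂S) |>.mpr ?_
              exact ⟨a, (hS₁S haS₁), haTS₂⟩
            have hIH := ih _ hTS₂sub
            have hsplit := lll_split (μ := μ) hA a (T ∪ S₂)
            have hq := hIH.1 a
            have : (μ (⋂ j ∈ insert a (T ∪ S₂), (A j)ᶜ)).toReal
                ≥ (1 - x a) * (μ (⋂ j ∈ T ∪ S₂, (A j)ᶜ)).toReal := by nlinarith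
            calc (∏ j ∈ insert a T, (1 - x j)) * (μ (⋂ j ∈ S₂, (A j)ᶜ)).toReal
                = (1 - x a) * ((∏ j ∈ T, (1 - x j)) * (μ (⋂ j ∈ S₂, (A j)ᶜ)).toReal) := by
                  rw [Finset.prod_insert ha]; ring
              _ ≤ (1 - x a) * (μ (⋂ j ∈ T ∪ S₂, (A j)ᶜ)).toReal :=
                  mul_le_mul_of_nonneg_left (ihT hTS₁) (le_of_lt (hx1' a))
              _ ≤ (μ (⋂ j ∈ insert a (T ∪ S₂), (A j)ᶜ)).toReal := this
              _ = (μ (⋂ j ∈ insert a T ∪ S₂, (A j)ᶜ)).toReal := by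
                  rw [Finset.insert_union]
        -- numerator bound
        have hnum : (μ (A i ∩ ⋂ j ∈ S, (A j)ᶜ)).toReal
            ≤ (μ (A i)).toReal * (μ (⋂ j ∈ S₂, (A j)ᶜ)).toReal := by
          have h1 := lll_mono (μ := μ) (A := A) S₂ S hS₂S (A i)
          have h2 : μ (A i ∩ ⋂ j ∈ S₂, (A j)ᶜ) = μ (A i) * μ (⋂ j ∈ S₂, (A j)ᶜ) := by
            apply hindA
            intro j hj
            have hj' := Finset.mem_sdiff.mp hj
            exact ⟨fun h => hiS (h ▸ hj'.1), hj'.2⟩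
          calc (μ (A i ∩ ⋂ j ∈ S, (A j)ᶜ)).toReal
              ≤ (μ (A i ∩ ⋂ j ∈ S₂, (A j)ᶜ)).toReal := h1
            _ = (μ (A i)).toReal * (μ (⋂ j ∈ S₂, (A j)ᶜ)).toReal := by
                rw [h2, ENNReal.toReal_mul]
        -- product comparison : ∏_{Γ i} ≤ ∏_{S₁}
        have hprodcmp : ∏ j ∈ Γ i, (1 - x j) ≤ ∏ j ∈ S₁, (1 - x j) := by
          have : S₁ ⊆ Γ i := Finset.inter_subset_right
          rw [← Finset.prod_sdiff this]
          have h1 : ∏ j ∈ Γ i \ S₁, (1 - x j) ≤ 1 :=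
            Finset.prod_le_one (fun j _ => le_of_lt (hx1' j)) (fun j _ => by linarith [hx0 j])
          have h2 : 0 < ∏ j ∈ S₁, (1 - x j) := Finset.prod_pos (fun j _ => hx1' j)
          nlinarith
        have hfin := hden S₁ (le_refl _)
        rw [hunion] at hfin
        have hAi := hlll i
        have hAi0 : 0 ≤ (μ (A i)).toReal := ENNReal.toReal_nonneg
        have hP2 : 0 ≤ (μ (⋂ j ∈ S₂, (A j)ᶜ)).toReal := hPnonneg S₂
        calc (μ (A i ∩ ⋂ j ∈ S, (A j)ᶜ)).toReal
            ≤ (μ (A i)).toReal * (μ (⋂ j ∈ S₂, (A j)ᶜ)).toReal := hnum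
          _ ≤ (x i * ∏ j ∈ Γ i, (1 - x j)) * (μ (⋂ j ∈ S₂, (A j)ᶜ)).toReal :=
              mul_le_mul_of_nonneg_right hAi hP2
          _ ≤ (x i * ∏ j ∈ S₁, (1 - x j)) * (μ (⋂ j ∈ S₂, (A j)ᶜ)).toReal := by
              apply mul_le_mul_of_nonneg_right _ hP2
              exact mul_le_mul_of_nonneg_left hprodcmp (hx0 i)
          _ = x i * ((∏ j ∈ S₁, (1 - x j)) * (μ (⋂ j ∈ S₂, (A j)ᶜ)).toReal) := by ring
          _ ≤ x i * (μ (⋂ j ∈ S, (A j)ᶜ)).toReal :=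
              mul_le_mul_of_nonneg_left hfin (hx0 i)
    refine ⟨parta, ?_⟩
    -- part (b)
    rcases Finset.eq_empty_or_nonempty S with rfl | ⟨j, hj⟩
    · simp
    · have hS' : S.erase j ⊂ S := Finset.erase_ssubset hj
      have hIH := ih _ hS'
      have hsplit := lll_split (μ := μ) hA j (S.erase j)
      rw [Finset.insert_erase hj] at hsplit
      have hq := (ih _ hS').1 j
      have hb := (ih _ hS').2
      have hprod : ∏ k ∈ S, (1 - x k) = (1 - x j) * ∏ k ∈ S.erase j, (1 - x k) :=
        (Finset.mul_prod_erase S _ hj).symm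
      have hx1j := fun i => hx1 i
      have hpp : 0 ≤ ∏ k ∈ S.erase j, (1 - x k) :=
        le_of_lt (Finset.prod_pos (fun k _ => by linarith [hx1 k]))
      nlinarith [hx1 j, hx0 j]
end
theorem stmt11 {Ω : Type*} [MeasurableSpace Ω] (μ : Measure Ω) [IsProbabilityMeasure μ]
    {m : ℕ} (A : Fin m → Set Ω) (E : Set Ω)
    (hA : ∀ i, MeasurableSet (A i)) (hE : MeasurableSet E)
    (Γ : Fin m → Finset (Fin m)) (ΓE : Finset (Fin m))
    -- `A i` is independent of the collection of events outside `Γ⁺(i)`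
    (hindA : ∀ (i : Fin m) (S : Finset (Fin m)), (∀ j ∈ S, j ≠ i ∧ j ∉ Γ i) →
      μ (A i ∩ ⋂ j ∈ S, (A j)ᶜ) = μ (A i) * μ (⋂ j ∈ S, (A j)ᶜ))
    -- `E` is independent of the collection of events outside `Γ(E)`
    (hindE : ∀ S : Finset (Fin m), (∀ j ∈ S, j ∉ ΓE) →
      μ (E ∩ ⋂ j ∈ S, (A j)ᶜ) = μ E * μ (⋂ j ∈ S, (A j)ᶜ))
    -- the Lovász Local Lemma condition
    (x : Fin m → ℝ) (hx0 : ∀ i, 0 ≤ x i) (hx1 : ∀ i, x i < 1)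
    (hlll : ∀ i, (μ (A i)).toReal ≤ x i * ∏ j ∈ Γ i, (1 - x j))
    (S : Finset (Fin m))
    (hpos : 0 < (μ (⋂ j ∈ S, (A j)ᶜ)).toReal) :
    (μ (E ∩ ⋂ j ∈ S, (A j)ᶜ)).toReal / (μ (⋂ j ∈ S, (A j)ᶜ)).toReal
      ≤ (μ E).toReal * ∏ i ∈ ΓE ∩ S, (1 - x i)⁻¹ := by
  classical
  have core := lll_core (μ := μ) (A := A) (Γ := Γ) (x := x) hA hindA hx0 hx1 hlll
  have hx1' : ∀ i, 0 < 1 - x i := fun i => by linarith [hx1 i]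
  have hPpos : ∀ T : Finset (Fin m), 0 < (μ (⋂ j ∈ T, (A j)ᶜ)).toReal := fun T =>
    lt_of_lt_of_le (Finset.prod_pos (fun j _ => hx1' j)) (core T).2
  have main : ∀ (n : ℕ) (T : Finset (Fin m)), (ΓE ∩ T).card ≤ n →
      (μ (E ∩ ⋂ j ∈ T, (A j)ᶜ)).toReal / (μ (⋂ j ∈ T, (A j)ᶜ)).toReal
        ≤ (μ E).toReal * ∏ i ∈ ΓE ∩ T, (1 - x i)⁻¹ := by
    intro n
    induction n with
    | zero =>
      intro T hT
      have hempty : ΓE ∩ T = ∅ := Finset.card_eq_zero.mp (Nat.le_zero.mp hT)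
      have hnot : ∀ j ∈ T, j ∉ ΓE := by
        intro j hjT hjΓ
        have : j ∈ ΓE ∩ T := Finset.mem_inter.mpr ⟨hjΓ, hjT⟩
        simp [hempty] at this
      rw [hindE T hnot, ENNReal.toReal_mul, hempty]
      rw [Finset.prod_empty, mul_one, mul_div_assoc, div_self (ne_of_gt (hPpos T)), mul_one]
    | succ n ihn =>
      intro T hT
      by_cases hcard : (ΓE ∩ T).card ≤ n
      · exact ihn T hcard
      · have hne : (ΓE ∩ T).Nonempty := by
          rw [← Finset.card_pos]; omega
        obtain ⟨i, hi⟩ := hne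
        have hiΓ : i ∈ ΓE := (Finset.mem_inter.mp hi).1
        have hiT : i ∈ T := (Finset.mem_inter.mp hi).2
        set T' := T.erase i with hT'
        have hEr : ΓE ∩ T' = (ΓE ∩ T).erase i := by
          ext k
          simp only [hT', Finset.mem_inter, Finset.mem_erase]
          tauto
        have hcard' : (ΓE ∩ T').card ≤ n := by
          rw [hEr]
          have := Finset.card_erase_of_mem hi
          omega
        have hRmono : (μ (E ∩ ⋂ j ∈ T, (A j)ᶜ)).toReal
            ≤ (μ (E ∩ ⋂ j ∈ T', (A j)ᶜ)).toReal :=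
          lll_mono (μ := μ) (A := A) T' T (Finset.erase_subset i T) E
        have hsplit := lll_split (μ := μ) hA i T'
        rw [hT', Finset.insert_erase hiT] at hsplit
        have hq := (core T').1 i
        have hPbound : (1 - x i) * (μ (⋂ j ∈ T', (A j)ᶜ)).toReal
            ≤ (μ (⋂ j ∈ T, (A j)ᶜ)).toReal := by nlinarith
        have hdpos : 0 < (1 - x i) * (μ (⋂ j ∈ T', (A j)ᶜ)).toReal :=
          mul_pos (hx1' i) (hPpos T')
        have h1 : (μ (E ∩ ⋂ j ∈ T, (A j)ᶜ)).toReal / (μ (⋂ j ∈ T, (A j)ᶜ)).toReal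
            ≤ (μ (E ∩ ⋂ j ∈ T', (A j)ᶜ)).toReal
              / ((1 - x i) * (μ (⋂ j ∈ T', (A j)ᶜ)).toReal) :=
          div_le_div₀ ENNReal.toReal_nonneg hRmono hdpos hPbound
        have h2 : (μ (E ∩ ⋂ j ∈ T', (A j)ᶜ)).toReal
              / ((1 - x i) * (μ (⋂ j ∈ T', (A j)ᶜ)).toReal)
            = ((μ (E ∩ ⋂ j ∈ T', (A j)ᶜ)).toReal / (μ (⋂ j ∈ T', (A j)ᶜ)).toReal)
              * (1 - x i)⁻¹ := by
          rw [mul_comm (1 - x i), ← div_div, div_eq_mul_inv]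
        have h3 := ihn T' hcard'
        have hprodstep : ∏ k ∈ ΓE ∩ T, (1 - x k)⁻¹
            = (1 - x i)⁻¹ * ∏ k ∈ ΓE ∩ T', (1 - x k)⁻¹ := by
          rw [hEr]
          exact (Finset.mul_prod_erase _ _ hi).symm
        have hinv : (0:ℝ) ≤ (1 - x i)⁻¹ := le_of_lt (inv_pos.mpr (hx1' i))
        calc (μ (E ∩ ⋂ j ∈ T, (A j)ᶜ)).toReal / (μ (⋂ j ∈ T, (A j)ᶜ)).toReal
            ≤ ((μ (E ∩ ⋂ j ∈ T', (A j)ᶜ)).toReal / (μ (⋂ j ∈ T', (A j)ᶜ)).toReal)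
              * (1 - x i)⁻¹ := by rw [← h2]; exact h1
          _ ≤ ((μ E).toReal * ∏ k ∈ ΓE ∩ T', (1 - x k)⁻¹) * (1 - x i)⁻¹ :=
              mul_le_mul_of_nonneg_right h3 hinv
          _ = (μ E).toReal * ∏ k ∈ ΓE ∩ T, (1 - x k)⁻¹ := by
              rw [hprodstep]; ring
  exact main (ΓE ∩ S).card S le_rfl
end

section
/- (Symmetric version.) Under the hypotheses of the previous statement with x_i = 1/(Δ+1) for all i, where Δ is the maximum degree of the dependency graph and e·p·(Δ+1) ≤ 1 with p = max_i Pr(A_i): for any event E and S ⊆ [m], Pr(E | ∧_{i∈S}¬A_i) ≤ Pr(E)·(1 + 1/Δ)^{|Γ(E)|}. In particular, for any single event A_i with i ∉ S, Pr(A_i | ∧_{j∈S}¬A_j) ≤ e·p. -/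
open MeasureTheory Finset

namespace LLLaux

variable {Ω : Type*} [MeasurableSpace Ω] (μ : Measure Ω) [IsProbabilityMeasure μ]
  {m : ℕ} (A : Fin m → Set Ω)

/-- Intersection of complements over a finite index set. -/
abbrev II (S : Finset (Fin m)) : Set Ω := ⋂ j ∈ S, (A j)ᶜ

lemma II_mono {S T : Finset (Fin m)} (h : T ⊆ S) : II A S ⊆ II A T := by
  intro x hx
  simp only [II, Set.mem_iInter] at *
  exact fun j hj => hx j (h hj)

lemma II_split (hA : ∀ i, MeasurableSet (A i)) (k : Fin m) (S : Finset (Fin m)) :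
    (μ (II A S)).toReal
      = (μ (A k ∩ II A S)).toReal + (μ (II A (insert k S))).toReal := by
  have h1 : II A (insert k S) = II A S \ A k := by
    rw [II, Finset.set_biInter_insert, Set.inter_comm, ← Set.diff_eq]
  have h2 := measure_inter_add_diff (μ := μ) (II A S) (hA k)
  rw [h1, ← ENNReal.toReal_add (measure_ne_top μ _) (measure_ne_top μ _), Set.inter_comm]
  exact congrArg ENNReal.toReal h2.symm

lemma peel (Δ : ℕ) {n : ℕ} (hA : ∀ i, MeasurableSet (A i))
    (hQ : ∀ S : Finset (Fin m), S.card ≤ n → ∀ i ∉ S,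
      (μ (A i ∩ II A S)).toReal ≤ (1/((Δ:ℝ)+1)) * (μ (II A S)).toReal) :
    ∀ T S₂ : Finset (Fin m), Disjoint T S₂ → (T ∪ S₂).card ≤ n + 1 →
      ((Δ:ℝ)/(Δ+1)) ^ T.card * (μ (II A S₂)).toReal ≤ (μ (II A (T ∪ S₂))).toReal := by
  intro T
  induction T using Finset.induction with
  | empty => intro S₂ _ _; simp
  | @insert k T hk IH =>
    intro S₂ hdisj hcard
    have hkS2 : k ∉ S₂ := Finset.disjoint_left.mp hdisj (Finset.mem_insert_self k T)
    have hkS : k ∉ T ∪ S₂ := by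
      simp only [Finset.mem_union]
      push_neg
      exact ⟨hk, hkS2⟩
    have hins : insert k T ∪ S₂ = insert k (T ∪ S₂) := Finset.insert_union k T S₂
    have hcard' : (T ∪ S₂).card ≤ n := by
      rw [hins, Finset.card_insert_of_notMem hkS] at hcard; omega
    have hQk := hQ (T ∪ S₂) hcard' k hkS
    have hsplit := II_split μ A hA k (T ∪ S₂)
    have hIH := IH S₂ (Finset.disjoint_of_subset_left (Finset.subset_insert k T) hdisj)
      (hcard'.trans (Nat.le_succ n))
    have hc : (0:ℝ) ≤ (Δ:ℝ)/(Δ+1) := by positivity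
    have hΔ1 : ((Δ:ℝ)+1) ≠ 0 := by positivity
    rw [hins, Finset.card_insert_of_notMem hk]
    calc ((Δ:ℝ)/(Δ+1)) ^ (T.card + 1) * (μ (II A S₂)).toReal
        = ((Δ:ℝ)/(Δ+1)) * (((Δ:ℝ)/(Δ+1)) ^ T.card * (μ (II A S₂)).toReal) := by ring
      _ ≤ ((Δ:ℝ)/(Δ+1)) * (μ (II A (T ∪ S₂))).toReal := mul_le_mul_of_nonneg_left hIH hc
      _ = (μ (II A (T ∪ S₂))).toReal - (1/((Δ:ℝ)+1)) * (μ (II A (T ∪ S₂))).toReal := by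
          field_simp; ring
      _ ≤ (μ (II A (T ∪ S₂))).toReal - (μ (A k ∩ II A (T ∪ S₂))).toReal := by linarith
      _ = (μ (II A (insert k (T ∪ S₂)))).toReal := by linarith

lemma stepE {Δ n : ℕ} (hA : ∀ i, MeasurableSet (A i))
    (hQ : ∀ S : Finset (Fin m), S.card ≤ n → ∀ i ∉ S,
      (μ (A i ∩ II A S)).toReal ≤ (1/((Δ:ℝ)+1)) * (μ (II A S)).toReal)
    (hΔ : 1 ≤ Δ)
    (E : Set Ω) (ΓE : Finset (Fin m)) (S : Finset (Fin m))
    (hind : μ (E ∩ II A (S \ ΓE)) = μ E * μ (II A (S \ ΓE)))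
    (hcard : S.card ≤ n + 1) :
    (μ (E ∩ II A S)).toReal ≤
      (μ E).toReal * (1 + 1/(Δ:ℝ)) ^ (S ∩ ΓE).card * (μ (II A S)).toReal := by
  have hΔ0 : (Δ:ℝ) ≠ 0 := by
    have : (0:ℝ) < (Δ:ℝ) := by exact_mod_cast hΔ
    linarith
  have hdisj : Disjoint (S ∩ ΓE) (S \ ΓE) := by
    rw [Finset.disjoint_left]
    intro j hj hj'
    exact (Finset.mem_sdiff.mp hj').2 (Finset.mem_inter.mp hj).2
  have hunion : (S ∩ ΓE) ∪ (S \ ΓE) = S := by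
    ext j
    simp only [Finset.mem_union, Finset.mem_inter, Finset.mem_sdiff]
    tauto
  have h1 : (μ (E ∩ II A S)).toReal ≤ (μ (E ∩ II A (S \ ΓE))).toReal := by
    apply ENNReal.toReal_mono (measure_ne_top μ _)
    exact measure_mono (Set.inter_subset_inter_right E (II_mono A (Finset.sdiff_subset)))
  have h2 : (μ (E ∩ II A (S \ ΓE))).toReal
      = (μ E).toReal * (μ (II A (S \ ΓE))).toReal := by
    rw [hind, ENNReal.toReal_mul]
  have h3 := peel μ A Δ hA hQ (S ∩ ΓE) (S \ ΓE) hdisj (by rw [hunion]; exact hcard)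
  rw [hunion] at h3
  have hbc : (1 + 1/(Δ:ℝ)) * ((Δ:ℝ)/(Δ+1)) = 1 := by field_simp
  have hb0 : (0:ℝ) ≤ 1 + 1/(Δ:ℝ) := by positivity
  set k := (S ∩ ΓE).card
  have hbck : (1 + 1/(Δ:ℝ)) ^ k * ((Δ:ℝ)/(Δ+1)) ^ k = 1 := by
    rw [← mul_pow, hbc, one_pow]
  have h4 : (μ (II A (S \ ΓE))).toReal ≤ (1 + 1/(Δ:ℝ)) ^ k * (μ (II A S)).toReal := by
    calc (μ (II A (S \ ΓE))).toReal
        = (1 + 1/(Δ:ℝ)) ^ k * (((Δ:ℝ)/(Δ+1)) ^ k * (μ (II A (S \ ΓE))).toReal) := by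
          rw [← mul_assoc, hbck, one_mul]
      _ ≤ (1 + 1/(Δ:ℝ)) ^ k * (μ (II A S)).toReal :=
          mul_le_mul_of_nonneg_left h3 (pow_nonneg hb0 k)
  calc (μ (E ∩ II A S)).toReal
      ≤ (μ E).toReal * (μ (II A (S \ ΓE))).toReal := by rw [← h2]; exact h1
    _ ≤ (μ E).toReal * ((1 + 1/(Δ:ℝ)) ^ k * (μ (II A S)).toReal) :=
        mul_le_mul_of_nonneg_left h4 ENNReal.toReal_nonneg
    _ = (μ E).toReal * (1 + 1/(Δ:ℝ)) ^ k * (μ (II A S)).toReal := by ring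

lemma expb {Δ : ℕ} (hΔ : 1 ≤ Δ) : (1 + 1/(Δ:ℝ)) ^ Δ ≤ Real.exp 1 := by
  have hΔ0 : (0:ℝ) < (Δ:ℝ) := by exact_mod_cast hΔ
  have h1 : 1 + 1/(Δ:ℝ) ≤ Real.exp (1/(Δ:ℝ)) := by
    have := Real.add_one_le_exp (1/(Δ:ℝ)); linarith
  calc (1 + 1/(Δ:ℝ)) ^ Δ ≤ (Real.exp (1/(Δ:ℝ))) ^ Δ :=
      pow_le_pow_left₀ (by positivity) h1 Δ
    _ = Real.exp 1 := by
      rw [← Real.exp_nat_mul]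
      congr 1
      field_simp

lemma wfinal {Δ : ℕ} {p : ℝ} (hΔ : 1 ≤ Δ) (hp0 : 0 ≤ p)
    (he : Real.exp 1 * p * ((Δ:ℝ) + 1) ≤ 1) :
    p * (1 + 1/(Δ:ℝ)) ^ Δ ≤ 1/((Δ:ℝ)+1) ∧ p * (1 + 1/(Δ:ℝ)) ^ Δ ≤ Real.exp 1 * p := by
  have h1 : p * (1 + 1/(Δ:ℝ)) ^ Δ ≤ p * Real.exp 1 :=
    mul_le_mul_of_nonneg_left (expb hΔ) hp0
  have h2 : p * Real.exp 1 ≤ 1/((Δ:ℝ)+1) := by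
    rw [le_div_iff₀ (by positivity)]
    nlinarith [he]
  exact ⟨h1.trans h2, by linarith⟩

lemma keyQ (hA : ∀ i, MeasurableSet (A i)) (Γ : Fin m → Finset (Fin m))
    (hindA : ∀ (i : Fin m) (S : Finset (Fin m)), (∀ j ∈ S, j ≠ i ∧ j ∉ Γ i) →
      μ (A i ∩ ⋂ j ∈ S, (A j)ᶜ) = μ (A i) * μ (⋂ j ∈ S, (A j)ᶜ))
    (Δ : ℕ) (hΔ : 1 ≤ Δ) (hdeg : ∀ i, (Γ i).card ≤ Δ)
    (p : ℝ) (hp : ∀ i, (μ (A i)).toReal ≤ p)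
    (he : Real.exp 1 * p * ((Δ:ℝ) + 1) ≤ 1) :
    ∀ n : ℕ, ∀ S : Finset (Fin m), S.card ≤ n → ∀ i ∉ S,
      (μ (A i ∩ II A S)).toReal ≤ (1/((Δ:ℝ)+1)) * (μ (II A S)).toReal := by
  intro n
  induction n with
  | zero =>
    intro S hS i _
    have hS0 : S = ∅ := Finset.card_eq_zero.mp (Nat.le_zero.mp hS)
    subst hS0
    have hp0 : 0 ≤ p := ENNReal.toReal_nonneg.trans (hp i)
    have hb1 : (1:ℝ) ≤ 1 + 1/(Δ:ℝ) := by
      have hΔ0 : (0:ℝ) < (Δ:ℝ) := by exact_mod_cast hΔ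
      have : 0 ≤ 1/(Δ:ℝ) := by positivity
      linarith
    have hfin := (wfinal hΔ hp0 he).1
    have hIe : II A (∅ : Finset (Fin m)) = Set.univ := by simp [II]
    rw [hIe]
    simp only [Set.inter_univ, measure_univ, ENNReal.toReal_one, mul_one]
    have h1 : (μ (A i)).toReal ≤ p := hp i
    have h2 : p ≤ p * (1 + 1/(Δ:ℝ)) ^ Δ := le_mul_of_one_le_right hp0 (one_le_pow₀ hb1)
    linarith
  | succ n IH =>
    intro S hS i hi
    have hind : μ (A i ∩ II A (S \ Γ i)) = μ (A i) * μ (II A (S \ Γ i)) := by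
      apply hindA i (S \ Γ i)
      intro j hj
      rcases Finset.mem_sdiff.mp hj with ⟨hjS, hjΓ⟩
      exact ⟨fun hji => hi (hji ▸ hjS), hjΓ⟩
    have h := stepE μ A hA IH hΔ (A i) (Γ i) S hind hS
    have hp0 : 0 ≤ p := ENNReal.toReal_nonneg.trans (hp i)
    have hb1 : (1:ℝ) ≤ 1 + 1/(Δ:ℝ) := by
      have hΔ0 : (0:ℝ) < (Δ:ℝ) := by exact_mod_cast hΔ
      have : 0 ≤ 1/(Δ:ℝ) := by positivity
      linarith
    have hk : (S ∩ Γ i).card ≤ Δ :=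
      (Finset.card_le_card (Finset.inter_subset_right)).trans (hdeg i)
    have h2 : (μ (A i)).toReal * (1 + 1/(Δ:ℝ)) ^ (S ∩ Γ i).card ≤ p * (1 + 1/(Δ:ℝ)) ^ Δ :=
      mul_le_mul (hp i) (pow_le_pow_right₀ hb1 hk) (pow_nonneg (by linarith) _)
        (ENNReal.toReal_nonneg.trans (hp i))
    have hfin := (wfinal hΔ hp0 he).1
    calc (μ (A i ∩ II A S)).toReal
        ≤ (μ (A i)).toReal * (1 + 1/(Δ:ℝ)) ^ (S ∩ Γ i).card * (μ (II A S)).toReal := h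
      _ ≤ p * (1 + 1/(Δ:ℝ)) ^ Δ * (μ (II A S)).toReal :=
          mul_le_mul_of_nonneg_right h2 ENNReal.toReal_nonneg
      _ ≤ (1/((Δ:ℝ)+1)) * (μ (II A S)).toReal :=
          mul_le_mul_of_nonneg_right hfin ENNReal.toReal_nonneg

end LLLaux

open LLLaux

theorem stmt12 {Ω : Type*} [MeasurableSpace Ω] (μ : Measure Ω) [IsProbabilityMeasure μ]
    {m : ℕ} (A : Fin m → Set Ω) (E : Set Ω)
    (hA : ∀ i, MeasurableSet (A i)) (hE : MeasurableSet E)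
    (Γ : Fin m → Finset (Fin m)) (ΓE : Finset (Fin m))
    -- `A i` is independent of the collection of events outside `Γ⁺(i)`
    (hindA : ∀ (i : Fin m) (S : Finset (Fin m)), (∀ j ∈ S, j ≠ i ∧ j ∉ Γ i) →
      μ (A i ∩ ⋂ j ∈ S, (A j)ᶜ) = μ (A i) * μ (⋂ j ∈ S, (A j)ᶜ))
    -- `E` is independent of the collection of events outside `Γ(E)`
    (hindE : ∀ S : Finset (Fin m), (∀ j ∈ S, j ∉ ΓE) →
      μ (E ∩ ⋂ j ∈ S, (A j)ᶜ) = μ E * μ (⋂ j ∈ S, (A j)ᶜ))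
    -- maximum degree `Δ` and symmetric LLL-type condition `e·p·(Δ+1) ≤ 1`
    (Δ : ℕ) (hΔ : 1 ≤ Δ) (hdeg : ∀ i, (Γ i).card ≤ Δ)
    (p : ℝ) (hp : ∀ i, (μ (A i)).toReal ≤ p)
    (he : Real.exp 1 * p * (Δ + 1) ≤ 1)
    (S : Finset (Fin m))
    (hpos : 0 < (μ (⋂ j ∈ S, (A j)ᶜ)).toReal) :
    (μ (E ∩ ⋂ j ∈ S, (A j)ᶜ)).toReal / (μ (⋂ j ∈ S, (A j)ᶜ)).toReal
        ≤ (μ E).toReal * (1 + 1 / (Δ : ℝ)) ^ ΓE.card ∧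
      ∀ i ∉ S, (μ (A i ∩ ⋂ j ∈ S, (A j)ᶜ)).toReal / (μ (⋂ j ∈ S, (A j)ᶜ)).toReal
        ≤ Real.exp 1 * p := by
  have hQ := keyQ μ A hA Γ hindA Δ hΔ hdeg p hp he S.card
  have hb1 : (1:ℝ) ≤ 1 + 1/(Δ:ℝ) := by
    have hΔ0 : (0:ℝ) < (Δ:ℝ) := by exact_mod_cast hΔ
    have : 0 ≤ 1/(Δ:ℝ) := by positivity
    linarith
  constructor
  · rw [div_le_iff₀ hpos]
    have hind : μ (E ∩ II A (S \ ΓE)) = μ E * μ (II A (S \ ΓE)) :=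
      hindE (S \ ΓE) (fun j hj => (Finset.mem_sdiff.mp hj).2)
    have h := stepE μ A hA hQ hΔ E ΓE S hind (Nat.le_succ _)
    have hk : (S ∩ ΓE).card ≤ ΓE.card := Finset.card_le_card (Finset.inter_subset_right)
    have h2 : (μ E).toReal * (1 + 1/(Δ:ℝ)) ^ (S ∩ ΓE).card
        ≤ (μ E).toReal * (1 + 1/(Δ:ℝ)) ^ ΓE.card :=
      mul_le_mul_of_nonneg_left (pow_le_pow_right₀ hb1 hk) ENNReal.toReal_nonneg
    calc (μ (E ∩ II A S)).toReal
        ≤ (μ E).toReal * (1 + 1/(Δ:ℝ)) ^ (S ∩ ΓE).card * (μ (II A S)).toReal := h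
      _ ≤ (μ E).toReal * (1 + 1/(Δ:ℝ)) ^ ΓE.card * (μ (II A S)).toReal :=
          mul_le_mul_of_nonneg_right h2 ENNReal.toReal_nonneg
  · intro i hi
    rw [div_le_iff₀ hpos]
    have hind : μ (A i ∩ II A (S \ Γ i)) = μ (A i) * μ (II A (S \ Γ i)) := by
      apply hindA i (S \ Γ i)
      intro j hj
      rcases Finset.mem_sdiff.mp hj with ⟨hjS, hjΓ⟩
      exact ⟨fun hji => hi (hji ▸ hjS), hjΓ⟩
    have h := stepE μ A hA hQ hΔ (A i) (Γ i) S hind (Nat.le_succ _)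
    have hp0 : 0 ≤ p := ENNReal.toReal_nonneg.trans (hp i)
    have hk : (S ∩ Γ i).card ≤ Δ :=
      (Finset.card_le_card (Finset.inter_subset_right)).trans (hdeg i)
    have h2 : (μ (A i)).toReal * (1 + 1/(Δ:ℝ)) ^ (S ∩ Γ i).card ≤ p * (1 + 1/(Δ:ℝ)) ^ Δ :=
      mul_le_mul (hp i) (pow_le_pow_right₀ hb1 hk) (pow_nonneg (by linarith) _)
        (ENNReal.toReal_nonneg.trans (hp i))
    have hfin := (wfinal hΔ hp0 he).2
    calc (μ (A i ∩ II A S)).toReal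
        ≤ (μ (A i)).toReal * (1 + 1/(Δ:ℝ)) ^ (S ∩ Γ i).card * (μ (II A S)).toReal := h
      _ ≤ p * (1 + 1/(Δ:ℝ)) ^ Δ * (μ (II A S)).toReal :=
          mul_le_mul_of_nonneg_right h2 ENNReal.toReal_nonneg
      _ ≤ Real.exp 1 * p * (μ (II A S)).toReal :=
          mul_le_mul_of_nonneg_right hfin ENNReal.toReal_nonneg
end
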